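/- arXiv:1512.05438 — 6 statements merged into one kernel-verified Lean document; each statement's English description precedes it below -/
import Mathlib

section
/- Let T : ℕ → ℕ be the shortcut Collatz map. For all k, m ∈ ℕ and all i ∈ ℕ with i < 2^k, we have T^k(2^k·m + i) = 3^{p_k(i)}·m + T^k(i), where p_k(i) is the number of indices r with 0 ≤ r < k such that T^r(i) is odd. -/
/-- The shortcut Collatz map: `T x = x / 2` if `x` is even, `(3 * x + 1) / 2` if `x` is odd. -/
def T : ℕ → ℕ := fun x => if x % 2 = 0 then x / 2 else (3 * x + 1) / 2

/-- `p k i` is the number of indices `r < k` such that `T^[r] i` is odd. -/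
def p (k i : ℕ) : ℕ := ((Finset.range k).filter (fun r => Odd (T^[r] i))).card

/-! Adding an even number `2 n` does not change the parity of `x`, so `T` acts on it by the same
affine branch: it halves `2 n` when `x` is even and triples-and-halves it when `x` is odd.
Iterating, `2 ^ k m` is halved `k` times and tripled once for each odd step of the orbit of `i`. -/

lemma T_two_mul_add (n x : ℕ) : T (2 * n + x) = 3 ^ (if Odd x then 1 else 0) * n + T x := by
  rcases Nat.even_or_odd x with hx | hx
  · have hx' : x % 2 = 0 := Nat.even_iff.mp hx
    simp only [T, Nat.not_odd_iff_even.mpr hx, hx', (show (2 * n + x) % 2 = 0 by omega),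
      ↓reduceIte, pow_zero, one_mul]
    omega
  · have hx' : x % 2 = 1 := Nat.odd_iff.mp hx
    simp only [T, hx, hx', (show (2 * n + x) % 2 = 1 by omega), one_ne_zero, ↓reduceIte,
      pow_one]
    omega

lemma p_succ (k i : ℕ) : p (k + 1) i = p k i + if Odd (T^[k] i) then 1 else 0 := by
  simp only [p, Finset.range_add_one, Finset.filter_insert]
  split
  · rw [Finset.card_insert_of_notMem (by simp)]
  · rfl

theorem collatz_class_formula_general (k m i : ℕ) :
    T^[k] (2 ^ k * m + i) = 3 ^ (p k i) * m + T^[k] i := by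
  induction k generalizing m with
  | zero => simp [p]
  | succ k ih =>
    calc T^[k + 1] (2 ^ (k + 1) * m + i)
        = T (T^[k] (2 ^ k * (2 * m) + i)) := by
          rw [Function.iterate_succ_apply', pow_succ, mul_assoc]
      _ = T (2 * (3 ^ p k i * m) + T^[k] i) := by rw [ih, mul_left_comm]
      _ = 3 ^ p (k + 1) i * m + T^[k + 1] i := by
          rw [T_two_mul_add, Function.iterate_succ_apply', p_succ, pow_add]
          ring

theorem collatz_class_formula (k m i : ℕ) (hi : i < 2 ^ k) :
    T^[k] (2 ^ k * m + i) = 3 ^ (p k i) * m + T^[k] i :=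
  collatz_class_formula_general k m i
end

section
/- Let x_0, x_1, …, x_m ∈ ℕ and k_1, …, k_m ∈ ℕ (with m ≥ 1) satisfy 3·x_{r−1} + 1 = 2^{k_r}·x_r for all 1 ≤ r ≤ m, write v_r = k_1 + … + k_r with v_0 = 0, and suppose x_m = 1. Then 3^m·x_0 + Σ_{t=0}^{m−1} 3^{m−1−t}·2^{v_t} = 2^{v_m} (equivalently, x_0 = (2^{v_m} − Σ_{t=0}^{m−1} 3^{m−1−t}·2^{v_t}) / 3^m, the Böhm–Sontacchi representation). -/
/-! Multiplying `3 x_{r-1} + 1 = 2^{k_r} x_r` by `2^{v_{r-1}}` shows that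
`3^r x_0 + ∑_{t<r} 3^{r-1-t} 2^{v_t} = 2^{v_r} x_r` is preserved from `r` to `r + 1`;
at `r = m` the right-hand side is `2^{v_m}` because `x_m = 1`. -/

open Finset

theorem sum_range_succ_pow_mul_eq_mul_add {R : Type*} [CommSemiring R] (a : R) (f : ℕ → R)
    (n : ℕ) :
    ∑ t ∈ range (n + 1), a ^ (n - t) * f t = a * ∑ t ∈ range n, a ^ (n - 1 - t) * f t + f n := by
  rw [sum_range_succ, Nat.sub_self, pow_zero, one_mul, mul_sum]
  congr 1
  refine sum_congr rfl fun t ht => ?_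
  have ht : t < n := mem_range.mp ht
  rw [← mul_assoc, ← pow_succ']
  congr 2
  omega

theorem three_pow_mul_add_sum_eq_two_pow_mul (x k : ℕ → ℕ) (n : ℕ)
    (h : ∀ r, 1 ≤ r → r ≤ n → 3 * x (r - 1) + 1 = 2 ^ (k r) * x r) :
    3 ^ n * x 0 + ∑ t ∈ range n, 3 ^ (n - 1 - t) * 2 ^ (∑ i ∈ Icc 1 t, k i) =
      2 ^ (∑ i ∈ Icc 1 n, k i) * x n := by
  induction n with
  | zero => simp
  | succ n ih =>
    have ih := ih fun r hr hrn => h r hr (hrn.trans n.le_succ)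
    have step : 3 * x n + 1 = 2 ^ (k (n + 1)) * x (n + 1) := h (n + 1) n.succ_pos le_rfl
    calc 3 ^ (n + 1) * x 0 + ∑ t ∈ range (n + 1), 3 ^ (n + 1 - 1 - t) * 2 ^ (∑ i ∈ Icc 1 t, k i)
        = 3 * (3 ^ n * x 0 + ∑ t ∈ range n, 3 ^ (n - 1 - t) * 2 ^ (∑ i ∈ Icc 1 t, k i)) +
            2 ^ (∑ i ∈ Icc 1 n, k i) := by
          rw [Nat.add_sub_cancel, sum_range_succ_pow_mul_eq_mul_add]
          ring
      _ = 2 ^ (∑ i ∈ Icc 1 n, k i) * (3 * x n + 1) := by rw [ih]; ring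
      _ = 2 ^ (∑ i ∈ Icc 1 (n + 1), k i) * x (n + 1) := by
          rw [step, ← mul_assoc, ← pow_add, sum_Icc_succ_top n.succ_pos]

theorem bohm_sontacchi_general (m : ℕ) (x k : ℕ → ℕ)
    (h : ∀ r, 1 ≤ r → r ≤ m → 3 * x (r - 1) + 1 = 2 ^ (k r) * x r)
    (hxm : x m = 1) :
    3 ^ m * x 0 +
        ∑ t ∈ Finset.range m, 3 ^ (m - 1 - t) * 2 ^ (∑ i ∈ Finset.Icc 1 t, k i) =
      2 ^ (∑ i ∈ Finset.Icc 1 m, k i) := by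
  rw [three_pow_mul_add_sum_eq_two_pow_mul x k m h, hxm, mul_one]

theorem bohm_sontacchi (m : ℕ) (hm : 1 ≤ m) (x k : ℕ → ℕ)
    (h : ∀ r, 1 ≤ r → r ≤ m → 3 * x (r - 1) + 1 = 2 ^ (k r) * x r)
    (hxm : x m = 1) :
    3 ^ m * x 0 +
        ∑ t ∈ Finset.range m, 3 ^ (m - 1 - t) * 2 ^ (∑ i ∈ Finset.Icc 1 t, k i) =
      2 ^ (∑ i ∈ Finset.Icc 1 m, k i) :=
  bohm_sontacchi_general m x k h hxm
end

section
/- Let T : ℕ → ℕ be the shortcut Collatz map. For every M ≥ 2 and every n with 1 ≤ n ≤ M − 1, the number of elements x of {1, 2, …, 2^M} with T^n(x) > T^{n−1}(x) equals 2^{M−1}, and the number of elements x of {1, 2, …, 2^M} with T^n(x) < T^{n−1}(x) also equals 2^{M−1}. In particular these two counts are equal at every such step. -/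
/-!
A step of the orbit goes up exactly when the current term is odd, and (away from `0`) down
exactly when it is even. By Terras' lemma, `T^[k]` is affine with odd slope on each residue class
`x + 2^k ℕ`, so shifting `x` by `2^k` flips the parity of `T^[k] x`. The parity of `T^[k] x` is
therefore `2^(k+1)`-periodic in `x` and takes each value on exactly half of every period, which
divides `2^M`.
-/

theorem Nat.count_mul_of_periodic {p : ℕ → Prop} [DecidablePred p] {a : ℕ}
    (hp : Function.Periodic p a) (m : ℕ) : Nat.count p (m * a) = m * Nat.count p a := by
  induction m with
  | zero => simp
  | succ m ih =>
    have hshift : (fun k ↦ p (m * a + k)) = p := funext fun k ↦ by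
      simpa [add_comm] using hp.nat_mul m k
    simp only [add_mul, one_mul, Nat.count_add, ih, hshift]

theorem Nat.count_two_mul_of_antiperiodic {p : ℕ → Prop} [DecidablePred p] {d : ℕ}
    (hp : ∀ x, p (x + d) ↔ ¬p x) : Nat.count p (2 * d) = d := by
  have hshift : (fun k ↦ p (d + k)) = fun k ↦ ¬p k := funext fun k ↦ by rw [add_comm, hp]
  rw [two_mul, Nat.count_add]
  simp only [hshift, Nat.count_eq_card_filter_range]
  rw [Finset.card_filter_add_card_filter_not, Finset.card_range]

theorem card_filter_Icc_one_of_antiperiodic {p : ℕ → Prop} [DecidablePred p] {d : ℕ}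
    (hp : ∀ x, p (x + d) ↔ ¬p x) (m : ℕ) :
    ((Finset.Icc 1 (2 * d * m)).filter p).card = d * m := by
  have hper : Function.Periodic p (2 * d) := fun x ↦ by
    rw [two_mul, ← add_assoc, hp, hp, not_not]
  have hper' : Function.Periodic p (m * (2 * d)) := by simpa using hper.nat_mul m
  rw [← Finset.Ico_add_one_right_eq_Icc, add_comm, mul_comm,
    Nat.filter_Ico_card_eq_of_periodic _ _ _ hper', Nat.count_mul_of_periodic hper,
    Nat.count_two_mul_of_antiperiodic hp, mul_comm]

theorem T_of_even {x : ℕ} (h : Even x) : T x = x / 2 := if_pos (Nat.even_iff.mp h)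

theorem T_of_odd {x : ℕ} (h : Odd x) : T x = (3 * x + 1) / 2 := if_neg (by grind)

theorem lt_T_iff (x : ℕ) : x < T x ↔ Odd x := by
  rw [Nat.odd_iff]; unfold T; split <;> omega

theorem T_lt_iff {x : ℕ} (hx : x ≠ 0) : T x < x ↔ Even x := by
  rw [Nat.even_iff]; unfold T; split <;> omega

theorem T_pos {x : ℕ} (hx : 0 < x) : 0 < T x := by
  unfold T; split <;> omega

theorem T_iterate_pos {x : ℕ} (hx : 0 < x) (k : ℕ) : 0 < T^[k] x :=
  Set.MapsTo.iterate (f := T) (s := Set.Ioi 0) (fun _ ↦ T_pos) k hx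

-- The slope is `3 ^ j`, `j` the number of odd terms among `x, T x, …, T^[k-1] x`.
theorem exists_odd_T_iterate_add_two_pow_mul (k x : ℕ) :
    ∃ c, Odd c ∧ ∀ a, T^[k] (x + 2 ^ k * a) = T^[k] x + c * a := by
  induction k with
  | zero => exact ⟨1, odd_one, fun a ↦ by simp⟩
  | succ k ih =>
    obtain ⟨c, hc, h⟩ := ih
    have hstep (a : ℕ) : T^[k + 1] (x + 2 ^ (k + 1) * a) = T (T^[k] x + 2 * (c * a)) := by
      rw [Function.iterate_succ_apply', pow_succ, mul_assoc, h]; ring_nf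
    rcases Nat.even_or_odd (T^[k] x) with hy | hy
    · refine ⟨c, hc, fun a ↦ ?_⟩
      rw [hstep, Function.iterate_succ_apply', T_of_even hy, T_of_even (by grind)]
      grind
    · refine ⟨3 * c, by grind, fun a ↦ ?_⟩
      rw [hstep, Function.iterate_succ_apply', T_of_odd hy, T_of_odd (by grind)]
      grind

theorem odd_T_iterate_add_two_pow (k x : ℕ) : Odd (T^[k] (x + 2 ^ k)) ↔ ¬Odd (T^[k] x) := by
  obtain ⟨c, hc, h⟩ := exists_odd_T_iterate_add_two_pow_mul k x
  rw [← mul_one (2 ^ k), h, mul_one, Nat.odd_add, ← Nat.not_odd_iff_even]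
  tauto

theorem half_increase_half_decrease_general (M n : ℕ) (hn1 : 1 ≤ n) (hnM : n ≤ M - 1) :
    ((Finset.Icc 1 (2 ^ M)).filter (fun x => T^[n] x > T^[n - 1] x)).card = 2 ^ (M - 1) ∧
    ((Finset.Icc 1 (2 ^ M)).filter (fun x => T^[n] x < T^[n - 1] x)).card = 2 ^ (M - 1) := by
  obtain ⟨k, rfl⟩ : ∃ k, n = k + 1 := ⟨n - 1, by omega⟩
  have hblocks : 2 * 2 ^ k * 2 ^ (M - 1 - k) = 2 ^ M := by
    rw [mul_assoc, ← pow_add, ← pow_succ']; congr 1; omega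
  have hhalf : 2 ^ k * 2 ^ (M - 1 - k) = 2 ^ (M - 1) := by rw [← pow_add]; congr 1; omega
  have hodd : ∀ x, Odd (T^[k] (x + 2 ^ k)) ↔ ¬Odd (T^[k] x) := odd_T_iterate_add_two_pow k
  have heven : ∀ x, Even (T^[k] (x + 2 ^ k)) ↔ ¬Even (T^[k] x) := fun x ↦ by
    rw [← Nat.not_odd_iff_even, ← Nat.not_odd_iff_even, hodd, not_not]
  have hcard_odd :=
    card_filter_Icc_one_of_antiperiodic (p := fun x ↦ Odd (T^[k] x)) hodd (2 ^ (M - 1 - k))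
  have hcard_even :=
    card_filter_Icc_one_of_antiperiodic (p := fun x ↦ Even (T^[k] x)) heven (2 ^ (M - 1 - k))
  rw [hblocks, hhalf] at hcard_odd hcard_even
  rw [Nat.add_sub_cancel]
  refine ⟨Eq.trans ?_ hcard_odd, Eq.trans ?_ hcard_even⟩ <;> congr 1 <;>
    refine Finset.filter_congr fun x hx ↦ ?_ <;> rw [Function.iterate_succ_apply']
  · exact lt_T_iff _
  · exact T_lt_iff (T_iterate_pos (Finset.mem_Icc.mp hx).1 k).ne'

theorem half_increase_half_decrease (M n : ℕ) (hM : 2 ≤ M) (hn1 : 1 ≤ n) (hnM : n ≤ M - 1) :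
    ((Finset.Icc 1 (2 ^ M)).filter (fun x => T^[n] x > T^[n - 1] x)).card = 2 ^ (M - 1) ∧
    ((Finset.Icc 1 (2 ^ M)).filter (fun x => T^[n] x < T^[n - 1] x)).card = 2 ^ (M - 1) :=
  half_increase_half_decrease_general M n hn1 hnM
end

section
/- Let T : ℕ → ℕ be the shortcut Collatz map. For every n ∈ ℕ, every i ∈ ℕ with i < 2^n, and every m ∈ ℕ: T^n(2^{n+1}·m + i) has the same parity as T^n(i), while T^n(2^{n+1}·m + 2^n + i) has the opposite parity to T^n(i). (That is, of the two residue classes modulo 2^{n+1} contained in the class of i modulo 2^n, all elements of one experience an increase at step n+1 and all elements of the other experience a decrease at step n+1.) -/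
/-!
Since `T (2 * b + i) = 3 ^ (i % 2) * b + T i`, iterating `n` times sends `2 ^ n * a + i` to
`3 ^ c * a + T^[n] i` for some `c`. As `3 ^ c` is odd, `T^[n] (2 ^ n * a + i)` has the parity of
`a + T^[n] i`; take `a = 2 * m` and `a = 2 * m + 1`.
-/

theorem T_two_mul_add_s8 (b i : ℕ) : T (2 * b + i) = 3 ^ (i % 2) * b + T i := by
  rcases Nat.mod_two_eq_zero_or_one i with hi | hi <;>
  · rw [hi]
    simp only [T]
    split_ifs <;> omega

theorem iterate_T_two_pow_mul_add (n : ℕ) :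
    ∀ a i : ℕ, ∃ c : ℕ, T^[n] (2 ^ n * a + i) = 3 ^ c * a + T^[n] i := by
  induction n with
  | zero => exact fun a i => ⟨0, by simp⟩
  | succ n ih =>
    intro a i
    obtain ⟨c, hc⟩ := ih (3 ^ (i % 2) * a) (T i)
    refine ⟨c + i % 2, ?_⟩
    calc T^[n + 1] (2 ^ (n + 1) * a + i)
        = T^[n] (T (2 * (2 ^ n * a) + i)) := by
          rw [Function.iterate_succ_apply, pow_succ', mul_assoc]
      _ = T^[n] (2 ^ n * (3 ^ (i % 2) * a) + T i) := by rw [T_two_mul_add_s8, mul_left_comm]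
      _ = 3 ^ (c + i % 2) * a + T^[n + 1] i := by
        rw [hc, pow_add, mul_assoc, Function.iterate_succ_apply]

theorem iterate_T_two_pow_mul_add_mod_two (n a i : ℕ) :
    T^[n] (2 ^ n * a + i) % 2 = (a + T^[n] i) % 2 := by
  obtain ⟨c, hc⟩ := iterate_T_two_pow_mul_add n a i
  have h3c : 3 ^ c % 2 = 1 := Nat.odd_iff.mp (Odd.pow (by decide))
  rw [hc, Nat.add_mod, Nat.mul_mod, h3c, one_mul, Nat.mod_mod, ← Nat.add_mod]

theorem collatz_split_parity_general (n i m : ℕ) :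
    T^[n] (2 ^ (n + 1) * m + i) % 2 = T^[n] i % 2 ∧
    T^[n] (2 ^ (n + 1) * m + 2 ^ n + i) % 2 ≠ T^[n] i % 2 := by
  have h_even := iterate_T_two_pow_mul_add_mod_two n (2 * m) i
  have h_odd := iterate_T_two_pow_mul_add_mod_two n (2 * m + 1) i
  rw [← mul_assoc, ← pow_succ] at h_even
  rw [mul_add, mul_one, ← mul_assoc, ← pow_succ] at h_odd
  omega

theorem collatz_split_parity (n i m : ℕ) (hi : i < 2 ^ n) :
    T^[n] (2 ^ (n + 1) * m + i) % 2 = T^[n] i % 2 ∧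
    T^[n] (2 ^ (n + 1) * m + 2 ^ n + i) % 2 ≠ T^[n] i % 2 :=
  collatz_split_parity_general n i m
end

section
/- Let T : ℕ → ℕ be the shortcut Collatz map. For every M ∈ ℕ, every n < M, and every i ∈ ℕ with i < 2^n, the number of elements x of {1, 2, …, 2^M} with x ≡ i (mod 2^n) and T^{n+1}(x) > T^n(x) equals 2^{M−n−1}; i.e. exactly half of the elements of each residue class modulo 2^n inside {1, …, 2^M} experience an increase at step n+1. -/
/-!
Adding `2 ^ n * a` to `x` leaves the first `n` parity choices unchanged, so it shifts `T^[n] x`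
by `3 ^ k * a`, where `k` counts the odd steps. So `T^[n] x` has the parity of
`T^[n] (x % 2 ^ n) + x / 2 ^ n`, and inside a residue class modulo `2 ^ n` the step `n + 1`
increases (i.e. `T^[n] x` is odd) on exactly one of its two lifts modulo `2 ^ (n + 1)`. Such a
class meets `{1, …, 2 ^ M}` in `2 ^ (M - n - 1)` points.
-/

open Finset

theorem card_filter_Icc_mod_eq {q r : ℕ} (hr : r < q) (K : ℕ) :
    #{x ∈ Icc 1 (q * K) | x % q = r} = K := by
  have h := Nat.Ioc_filter_modEq_card 0 (q * K) (r.zero_le.trans_lt hr) r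
  have hsplit : (((q * K : ℕ) : ℚ) - r) / q = K + (0 - r) / q := by
    have hq : (q : ℚ) ≠ 0 := by norm_cast; omega
    push_cast; field_simp; ring
  rw [← Icc_add_one_left_eq_Ioc, hsplit, Int.floor_natCast_add] at h
  simpa [Nat.ModEq, Nat.mod_eq_of_lt hr] using h

theorem T_add_two_mul (x a : ℕ) : T (x + 2 * a) = T x + if x % 2 = 0 then a else 3 * a := by
  unfold T
  split_ifs <;> omega

theorem lt_T_iff_s9 (y : ℕ) : y < T y ↔ y % 2 = 1 := by
  unfold T
  split_ifs <;> omega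

theorem exists_iterate_T_add_two_pow_mul (n x a : ℕ) :
    ∃ k, T^[n] (x + 2 ^ n * a) = T^[n] x + 3 ^ k * a := by
  induction n generalizing x a with
  | zero => exact ⟨0, by simp⟩
  | succ n ih =>
    have hT : T (x + 2 ^ (n + 1) * a) = T x + 2 ^ n * (if x % 2 = 0 then a else 3 * a) := by
      rw [pow_succ', mul_assoc, T_add_two_mul]
      split_ifs <;> ring
    obtain ⟨k, hk⟩ := ih (T x) (if x % 2 = 0 then a else 3 * a)
    refine ⟨if x % 2 = 0 then k else k + 1, ?_⟩
    rw [Function.iterate_succ_apply, Function.iterate_succ_apply, hT, hk]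
    split_ifs <;> ring

theorem iterate_T_mod_two (n x : ℕ) : T^[n] x % 2 = (T^[n] (x % 2 ^ n) + x / 2 ^ n) % 2 := by
  obtain ⟨k, hk⟩ := exists_iterate_T_add_two_pow_mul n (x % 2 ^ n) (x / 2 ^ n)
  rw [Nat.mod_add_div] at hk
  rw [hk, Nat.add_mod, Nat.mul_mod, Nat.pow_mod]
  simp

theorem mod_two_pow_eq_and_lt_iterate_T_iff {n i : ℕ} (hi : i < 2 ^ n) (x : ℕ) :
    (x % 2 ^ n = i ∧ T^[n] x < T^[n + 1] x) ↔
      x % 2 ^ (n + 1) = i + 2 ^ n * ((T^[n] i + 1) % 2) := by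
  rw [Function.iterate_succ_apply', lt_T_iff_s9, iterate_T_mod_two, Nat.mod_pow_succ]
  have hx := Nat.mod_lt x (pow_pos two_pos n)
  constructor
  · rintro ⟨rfl, hodd⟩
    congr 2
    omega
  · intro h
    obtain ⟨rfl, hb⟩ : x % 2 ^ n = i ∧ x / 2 ^ n % 2 = (T^[n] i + 1) % 2 := by
      rcases Nat.mod_two_eq_zero_or_one (x / 2 ^ n) with hb | hb <;>
        rcases Nat.mod_two_eq_zero_or_one (T^[n] i + 1) with hc | hc <;>
        rw [hb, hc] at h <;> omega
    omega

theorem half_of_each_class_increases (M n i : ℕ) (hn : n < M) (hi : i < 2 ^ n) :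
    ((Finset.Icc 1 (2 ^ M)).filter
        (fun x => x % 2 ^ n = i ∧ T^[n + 1] x > T^[n] x)).card = 2 ^ (M - n - 1) := by
  have hM : 2 ^ M = 2 ^ (n + 1) * 2 ^ (M - n - 1) := by
    rw [← pow_add]; congr 1; omega
  have hr : i + 2 ^ n * ((T^[n] i + 1) % 2) < 2 ^ (n + 1) := by
    have := Nat.mod_lt (T^[n] i + 1) two_pos
    rw [pow_succ]; nlinarith
  rw [hM, filter_congr fun x _ => mod_two_pow_eq_and_lt_iterate_T_iff hi x]
  exact card_filter_Icc_mod_eq hr _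
end

section
/- Let a, b ∈ ℕ be odd with a ≥ 3, and let T_{a,b} : ℕ → ℕ be the map T_{a,b}(x) = x/2 if x is even and T_{a,b}(x) = (a·x + b)/2 if x is odd. For every M ≥ 2 and every n with 1 ≤ n ≤ M − 1, the number of elements x of {1, 2, …, 2^M} with T_{a,b}^n(x) > T_{a,b}^{n−1}(x) equals 2^{M−1}, and the number of elements x of {1, 2, …, 2^M} with T_{a,b}^n(x) < T_{a,b}^{n−1}(x) also equals 2^{M−1}. -/
/-!
Shifting `x` by `2 ^ k * m` shifts `(Tab a b)^[k] x` by `a ^ e * m`, where `e` is the number of odd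
iterates: each step halves the shift, multiplying it by `a` when the iterate is odd. For `m = 1` the
shift is odd, so `x ↦ x + 2 ^ k` flips the parity of `(Tab a b)^[k] x`, and on every block of
`2 ^ (k + 1)` consecutive integers exactly half of the `x` make it odd. Since a positive `y`
increases under `Tab a b` exactly when it is odd and decreases exactly when it is even, taking
`k = n - 1` gives both counts.
-/

/-- The shortcut map of the `a*n + b` problem:
`Tab a b x = x / 2` if `x` is even, `(a * x + b) / 2` if `x` is odd. -/
def Tab (a b : ℕ) : ℕ → ℕ := fun x => if x % 2 = 0 then x / 2 else (a * x + b) / 2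

open Finset

lemma tab_add_two_mul (a b x m : ℕ) : Tab a b (x + 2 * m) = Tab a b x + a ^ (x % 2) * m := by
  rcases Nat.mod_two_eq_zero_or_one x with hx | hx <;> simp only [Tab, hx] <;> grind

lemma tab_iterate_add_two_pow_mul (a b k x m : ℕ) :
    ∃ e, (Tab a b)^[k] (x + 2 ^ k * m) = (Tab a b)^[k] x + a ^ e * m := by
  induction k generalizing x m with
  | zero => exact ⟨0, by simp⟩
  | succ k ih =>
    obtain ⟨e, he⟩ := ih (Tab a b x) (a ^ (x % 2) * m)
    refine ⟨e + x % 2, ?_⟩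
    rw [Function.iterate_succ_apply, Function.iterate_succ_apply, pow_succ', mul_assoc,
      tab_add_two_mul, mul_left_comm, he, pow_add, mul_assoc]

lemma even_tab_iterate_add_two_pow {a : ℕ} (ha : Odd a) (b k x : ℕ) :
    Even ((Tab a b)^[k] (x + 2 ^ k)) ↔ ¬Even ((Tab a b)^[k] x) := by
  obtain ⟨e, he⟩ := tab_iterate_add_two_pow_mul a b k x 1
  have hodd : ¬Even (a ^ e) := Nat.not_even_iff_odd.2 ha.pow
  simp only [mul_one] at he
  rw [he, Nat.even_add]
  tauto

lemma odd_tab_iterate_add_two_pow {a : ℕ} (ha : Odd a) (b k x : ℕ) :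
    Odd ((Tab a b)^[k] (x + 2 ^ k)) ↔ ¬Odd ((Tab a b)^[k] x) := by
  rw [← Nat.not_even_iff_odd, ← Nat.not_even_iff_odd, even_tab_iterate_add_two_pow ha]

lemma periodic_of_add_iff_not {p : ℕ → Prop} {d : ℕ} (hp : ∀ x, p (x + d) ↔ ¬p x) :
    Function.Periodic p (2 * d) := fun x => by
  rw [two_mul, ← add_assoc, eq_iff_iff, hp, hp, not_not]

lemma Nat.count_two_mul_of_add_iff_not {p : ℕ → Prop} [DecidablePred p] {d : ℕ}
    (hp : ∀ x, p (x + d) ↔ ¬p x) (m : ℕ) : Nat.count p (2 * d * m) = d * m := by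
  have hblock : Nat.count p (2 * d) = d := by
    have hshift : ∀ k, p (d + k) ↔ ¬p k := fun k => by rw [add_comm, hp]
    rw [two_mul, Nat.count_add]
    simp only [hshift]
    rw [Nat.count_eq_card_filter_range, Nat.count_eq_card_filter_range,
      card_filter_add_card_filter_not, card_range]
  induction m with
  | zero => simp
  | succ m ih =>
    have hshift : ∀ k, p (2 * d * m + k) ↔ p k := fun k => by
      rw [add_comm, mul_comm, ← eq_iff_iff]; exact (periodic_of_add_iff_not hp).nat_mul m k
    rw [mul_add_one, Nat.count_add, ih]
    simp only [hshift]
    rw [hblock, mul_add_one]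

lemma card_filter_Icc_of_add_iff_not {p : ℕ → Prop} [DecidablePred p] {d : ℕ}
    (hp : ∀ x, p (x + d) ↔ ¬p x) (m : ℕ) : #{x ∈ Icc 1 (2 * d * m) | p x} = d * m := by
  have hper : Function.Periodic p (2 * d * m) := by
    rw [mul_comm]; exact (periodic_of_add_iff_not hp).nat_mul m
  rw [← Nat.count_two_mul_of_add_iff_not hp, ← Nat.filter_Ico_card_eq_of_periodic 1 _ p hper,
    add_comm, Ico_add_one_right_eq_Icc]

lemma tab_pos {a b x : ℕ} (ha : 0 < a) (hb : 0 < b) (hx : 0 < x) : 0 < Tab a b x := by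
  have : a ≤ a * x := Nat.le_mul_of_pos_right a hx
  simp only [Tab]; split_ifs <;> omega

lemma tab_iterate_pos {a b x : ℕ} (ha : 0 < a) (hb : 0 < b) (hx : 0 < x) (k : ℕ) :
    0 < (Tab a b)^[k] x := by
  induction k with
  | zero => exact hx
  | succ k ih => rw [Function.iterate_succ_apply']; exact tab_pos ha hb ih

lemma lt_tab_iff_odd {a b : ℕ} (ha : 3 ≤ a) (hb : 0 < b) (y : ℕ) : y < Tab a b y ↔ Odd y := by
  have : 3 * y ≤ a * y := Nat.mul_le_mul_right y ha
  rw [Nat.odd_iff]; simp only [Tab]; split_ifs <;> omega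

lemma tab_lt_iff_even {a b y : ℕ} (ha : 2 ≤ a) (hy : 0 < y) : Tab a b y < y ↔ Even y := by
  have : 2 * y ≤ a * y := Nat.mul_le_mul_right y ha
  rw [Nat.even_iff]; simp only [Tab]; split_ifs <;> omega

theorem general_half_increase_half_decrease_general (a b : ℕ) (ha : Odd a) (hb : Odd b)
    (ha3 : 3 ≤ a) (M n : ℕ) (hn1 : 1 ≤ n) (hnM : n ≤ M - 1) :
    ((Finset.Icc 1 (2 ^ M)).filter
        (fun x => (Tab a b)^[n] x > (Tab a b)^[n - 1] x)).card = 2 ^ (M - 1) ∧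
    ((Finset.Icc 1 (2 ^ M)).filter
        (fun x => (Tab a b)^[n] x < (Tab a b)^[n - 1] x)).card = 2 ^ (M - 1) := by
  obtain ⟨k, rfl⟩ : ∃ k, n = k + 1 := ⟨n - 1, by omega⟩
  have hsplit : 2 ^ M = 2 * 2 ^ k * 2 ^ (M - (k + 1)) := by
    rw [← pow_succ', ← pow_add]; congr 1; omega
  have hhalf : 2 ^ (M - 1) = 2 ^ k * 2 ^ (M - (k + 1)) := by
    rw [← pow_add]; congr 1; omega
  have hpos : ∀ x ∈ Icc 1 (2 ^ M), 0 < (Tab a b)^[k] x := fun x hx =>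
    tab_iterate_pos (by omega) hb.pos (mem_Icc.1 hx).1 k
  simp only [Nat.add_sub_cancel, Function.iterate_succ_apply', gt_iff_lt]
  constructor
  · rw [filter_congr fun x _ => lt_tab_iff_odd ha3 hb.pos _, hsplit,
      card_filter_Icc_of_add_iff_not (odd_tab_iterate_add_two_pow ha b k), hhalf]
  · rw [filter_congr fun x hx => tab_lt_iff_even (by omega) (hpos x hx), hsplit,
      card_filter_Icc_of_add_iff_not (even_tab_iterate_add_two_pow ha b k), hhalf]

theorem general_half_increase_half_decrease (a b : ℕ) (ha : Odd a) (hb : Odd b)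
    (ha3 : 3 ≤ a) (M n : ℕ) (hM : 2 ≤ M) (hn1 : 1 ≤ n) (hnM : n ≤ M - 1) :
    ((Finset.Icc 1 (2 ^ M)).filter
        (fun x => (Tab a b)^[n] x > (Tab a b)^[n - 1] x)).card = 2 ^ (M - 1) ∧
    ((Finset.Icc 1 (2 ^ M)).filter
        (fun x => (Tab a b)^[n] x < (Tab a b)^[n - 1] x)).card = 2 ^ (M - 1) :=
  general_half_increase_half_decrease_general a b ha hb ha3 M n hn1 hnM
end
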